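/- A λJ-term t is in dβ-normal form if and only if t belongs to the set 𝚖 defined by the mutual grammar: 𝚖_var ::= x | 𝚖_var(𝚖, y.𝚖_var) and 𝚖 ::= x | λx.𝚖 | 𝚖_var(𝚖, y.𝚖). -/
import Mathlib


/-- λJ-terms: t ::= x | λx.t | t(u, y.r) (generalized application, y bound in r). -/
inductive Tm : Type
  | var : ℕ → Tm
  | lam : ℕ → Tm → Tm
  | gapp : Tm → Tm → ℕ → Tm → Tm
  deriving DecidableEq

namespace Tm

/-- Free variables. -/
def fv : Tm → Finset ℕ
  | var x => {x}
  | lam x t => fv t \ {x}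
  | gapp t u y r => fv t ∪ fv u ∪ (fv r \ {y})

/-- Substitution [u/x]t (under the Barendregt convention). -/
def sub (u : Tm) (x : ℕ) : Tm → Tm
  | var y => if y = x then u else var y
  | lam y t => if y = x then lam y t else lam y (sub u x t)
  | gapp t u' y r =>
      gapp (sub u x t) (sub u x u') y (if y = x then r else sub u x r)

end Tm

/-- Distant contexts D ::= ◇ | t(u, y.D). -/
inductive DCtx : Type
  | hole : DCtx
  | gapp : Tm → Tm → ℕ → DCtx → DCtx

/-- Plugging a term into a distant context. -/
def DCtx.fill : DCtx → Tm → Tm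
  | .hole, t => t
  | .gapp s u y D, t => Tm.gapp s u y (D.fill t)

/-- A term has abstraction shape iff it is D⟨λx.s⟩. -/
def AbsShape (t : Tm) : Prop := ∃ D x s, t = DCtx.fill D (Tm.lam x s)

/-- dβ-reduction: D⟨λx.t⟩(u, y.r) → [[u/x](D⟨t⟩)/y]r, closed under all contexts. -/
inductive Dbeta : Tm → Tm → Prop
  | root (D : DCtx) (x : ℕ) (t u : Tm) (y : ℕ) (r : Tm) :
      Dbeta (Tm.gapp (D.fill (Tm.lam x t)) u y r)
            (Tm.sub (Tm.sub u x (D.fill t)) y r)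
  | lam (x : ℕ) {t t' : Tm} : Dbeta t t' → Dbeta (Tm.lam x t) (Tm.lam x t')
  | gapp₁ {t t'} (u : Tm) (y : ℕ) (r : Tm) :
      Dbeta t t' → Dbeta (Tm.gapp t u y r) (Tm.gapp t' u y r)
  | gapp₂ (t : Tm) {u u'} (y : ℕ) (r : Tm) :
      Dbeta u u' → Dbeta (Tm.gapp t u y r) (Tm.gapp t u' y r)
  | gapp₃ (t u : Tm) (y : ℕ) {r r'} :
      Dbeta r r' → Dbeta (Tm.gapp t u y r) (Tm.gapp t u y r')

/-- Strong normalization of a term w.r.t. a reduction relation. -/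
def SNOf (R : Tm → Tm → Prop) (t : Tm) : Prop := Acc (fun a b => R b a) t

/-- dβ-normal form. -/
def DbetaNF (t : Tm) : Prop := ∀ t', ¬ Dbeta t t'

mutual
  /-- Grammar 𝚖_var ::= x | 𝚖_var(𝚖, y.𝚖_var). -/
  inductive Mvar : Tm → Prop
    | var (x : ℕ) : Mvar (.var x)
    | gapp {t u r : Tm} (y : ℕ) : Mvar t → Mnf u → Mvar r → Mvar (.gapp t u y r)
  /-- Grammar 𝚖 ::= x | λx.𝚖 | 𝚖_var(𝚖, y.𝚖). -/
  inductive Mnf : Tm → Prop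
    | var (x : ℕ) : Mnf (.var x)
    | lam (x : ℕ) {t : Tm} : Mnf t → Mnf (.lam x t)
    | gapp {t u r : Tm} (y : ℕ) : Mvar t → Mnf u → Mnf r → Mnf (.gapp t u y r)
end

/-- Neutral terms 𝚗 ::= x | 𝚗(u, y.𝚗). -/
inductive Neutral : Tm → Prop
  | var (x : ℕ) : Neutral (.var x)
  | gapp {t r : Tm} (u : Tm) (y : ℕ) : Neutral t → Neutral r → Neutral (.gapp t u y r)

/-- Answers 𝚊 ::= λx.t | 𝚗(u, y.𝚊). -/
inductive Answer : Tm → Prop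
  | lam (x : ℕ) (t : Tm) : Answer (.lam x t)
  | gapp {t r : Tm} (u : Tm) (y : ℕ) : Neutral t → Answer r → Answer (.gapp t u y r)

/-- D_n : distant contexts whose left components are neutral. -/
def DCtx.NeutralLeft : DCtx → Prop
  | .hole => True
  | .gapp s _ _ D => Neutral s ∧ D.NeutralLeft

/-- Weak-head contexts W ::= ◇ | W(u, y.r) | 𝚗(u, y.W). -/
inductive WCtx : Type
  | hole : WCtx
  | appL : WCtx → Tm → ℕ → Tm → WCtx
  | appR : Tm → Tm → ℕ → WCtx → WCtx

def WCtx.fill : WCtx → Tm → Tm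
  | .hole, t => t
  | .appL W u y r, t => Tm.gapp (W.fill t) u y r
  | .appR n u y W, t => Tm.gapp n u y (W.fill t)

/-- Well-formedness: left components of appR must be neutral. -/
def WCtx.Wf : WCtx → Prop
  | .hole => True
  | .appL W _ _ _ => W.Wf
  | .appR n _ _ W => Neutral n ∧ W.Wf

/-- Weak-head reduction: root dβ-rule with neutral distant context, under weak-head contexts. -/
inductive Wh : Tm → Tm → Prop
  | step (W : WCtx) (hW : W.Wf) (D : DCtx) (hD : D.NeutralLeft)
      (x : ℕ) (t u : Tm) (y : ℕ) (r : Tm) :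
      Wh (W.fill (Tm.gapp (D.fill (Tm.lam x t)) u y r))
         (W.fill (Tm.sub (Tm.sub u x (D.fill t)) y r))

/-- Weak-head normal form. -/
def WhNF (t : Tm) : Prop := ∀ t', ¬ Wh t t'

/-- Inductive characterization of dβ-strong normalization. -/
inductive ISN : Tm → Prop
  | snvar (x : ℕ) : ISN (.var x)
  | snabs {s : Tm} (x : ℕ) : ISN s → ISN (.lam x s)
  | snapp {n u r : Tm} {x : ℕ} : Neutral n → ISN n → ISN u → ISN r →
      WhNF (.gapp n u x r) → ISN (.gapp n u x r)
  | snbeta {W : WCtx} {D : DCtx} {x : ℕ} {s u : Tm} {y : ℕ} {r : Tm} :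
      W.Wf → D.NeutralLeft →
      ISN (W.fill (Tm.sub (Tm.sub u x (D.fill s)) y r)) →
      ISN (D.fill s) → ISN u →
      ISN (W.fill (Tm.gapp (D.fill (Tm.lam x s)) u y r))

/-- Simple types. -/
inductive Ty : Type
  | base : ℕ → Ty
  | arrow : Ty → Ty → Ty

/-- Simple typing for λJ. -/
inductive STyped : (ℕ → Ty) → Tm → Ty → Prop
  | var (Γ : ℕ → Ty) (x : ℕ) : STyped Γ (.var x) (Γ x)
  | abs {Γ : ℕ → Ty} {x : ℕ} {t : Tm} {τ : Ty} (σ : Ty) :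
      STyped (Function.update Γ x σ) t τ → STyped Γ (.lam x t) (.arrow σ τ)
  | app {Γ : ℕ → Ty} {t u : Tm} {y : ℕ} {r : Tm} {σ τ ρ : Ty} :
      STyped Γ t (.arrow σ τ) → STyped Γ u σ →
      STyped (Function.update Γ y τ) r ρ → STyped Γ (.gapp t u y r) ρ

/-- λ-calculus terms. -/
inductive Lm : Type
  | var : ℕ → Lm
  | lam : ℕ → Lm → Lm
  | app : Lm → Lm → Lm

/-- Substitution [u/x]M on λ-terms. -/
def Lm.sub (u : Lm) (x : ℕ) : Lm → Lm
  | .var y => if y = x then u else .var y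
  | .lam y t => if y = x then .lam y t else .lam y (Lm.sub u x t)
  | .app t s => .app (Lm.sub u x t) (Lm.sub u x s)

/-- β ∪ σ₁ reduction on λ-terms. -/
inductive BetaSigma : Lm → Lm → Prop
  | beta (x : ℕ) (M N : Lm) : BetaSigma (.app (.lam x M) N) (Lm.sub N x M)
  | sigma (x : ℕ) (M N P : Lm) :
      BetaSigma (.app (.app (.lam x M) N) P) (.app (.lam x (.app M P)) N)
  | lam (x : ℕ) {t t'} : BetaSigma t t' → BetaSigma (.lam x t) (.lam x t')
  | app₁ {t t'} (s : Lm) : BetaSigma t t' → BetaSigma (.app t s) (.app t' s)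
  | app₂ (t : Lm) {s s'} : BetaSigma s s' → BetaSigma (.app t s) (.app t s')

/-- The translation (·)* of λJ into the λ-calculus. -/
def star : Tm → Lm
  | .var x => .var x
  | .lam x t => .lam x (star t)
  | .gapp t u y r => .app (.lam y (star r)) (.app (star t) (star u))

/-- Non-idempotent intersection types: σ ::= a | M → σ with M a (multi)set of types. -/
inductive ITy : Type
  | base : ℕ → ITy
  | arrow : List ITy → ITy → ITy

/-- Typing environments: relevant maps from variables to multisets of types. -/
def IEnv : Type := ℕ → List ITy

/-- Pointwise multiset union of environments. -/
def envAdd (Γ Δ : IEnv) : IEnv := fun z => Γ z ++ Δ z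

/-- Empty environment. -/
def envEmpty : IEnv := fun _ => []

/-- The choice operator: identity on nonempty multisets, arbitrary singleton on the empty one. -/
def Choice (M M' : List ITy) : Prop :=
  (M ≠ [] ∧ M' = M) ∨ (M = [] ∧ ∃ σ, M' = [σ])

mutual
  /-- Sized typing derivations of system ∩J. -/
  inductive IDer : IEnv → Tm → ITy → ℕ → Prop
    | var (x : ℕ) (σ : ITy) :
        IDer (Function.update envEmpty x [σ]) (.var x) σ 1
    | abs {Γ : IEnv} {x : ℕ} {t : Tm} {σ : ITy} {n : ℕ} :
        IDer Γ t σ n →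
        IDer (Function.update Γ x []) (.lam x t) (.arrow (Γ x) σ) (n + 1)
    | app {L : List (List ITy × ITy)} {Mt Mu : List ITy}
        {Θ Δ Λ : IEnv} {t u r : Tm} {y : ℕ} {σ : ITy} {n₁ n₂ n₃ : ℕ} :
        Choice (L.map fun p => ITy.arrow p.1 p.2) Mt →
        Choice (L.map Prod.fst).flatten Mu →
        IDerM Θ t Mt n₁ →
        IDerM Δ u Mu n₂ →
        Λ y = [] →
        IDer (Function.update Λ y (L.map Prod.snd)) r σ n₃ →
        IDer (envAdd Θ (envAdd Δ Λ)) (.gapp t u y r) σ (1 + n₁ + n₂ + n₃)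
  /-- Sized (many)-derivations: multiset conclusions. -/
  inductive IDerM : IEnv → Tm → List ITy → ℕ → Prop
    | nil (t : Tm) : IDerM envEmpty t [] 0
    | cons {Γ Δ : IEnv} {t : Tm} {σ : ITy} {M : List ITy} {n m : ℕ} :
        IDer Γ t σ n → IDerM Δ t M m → IDerM (envAdd Γ Δ) t (σ :: M) (n + m)
end

/-- Non-erasing dβ-reduction: x ∈ fv(t) and y ∈ fv(r) for the contracted redex. -/
inductive DbetaNE : Tm → Tm → Prop
  | root (D : DCtx) {x : ℕ} {t : Tm} (u : Tm) {y : ℕ} {r : Tm} :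
      x ∈ Tm.fv t → y ∈ Tm.fv r →
      DbetaNE (Tm.gapp (D.fill (Tm.lam x t)) u y r)
              (Tm.sub (Tm.sub u x (D.fill t)) y r)
  | lam (x : ℕ) {t t' : Tm} : DbetaNE t t' → DbetaNE (Tm.lam x t) (Tm.lam x t')
  | gapp₁ {t t'} (u : Tm) (y : ℕ) (r : Tm) :
      DbetaNE t t' → DbetaNE (Tm.gapp t u y r) (Tm.gapp t' u y r)
  | gapp₂ (t : Tm) {u u'} (y : ℕ) (r : Tm) :
      DbetaNE u u' → DbetaNE (Tm.gapp t u y r) (Tm.gapp t u' y r)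
  | gapp₃ (t u : Tm) (y : ℕ) {r r'} :
      DbetaNE r r' → DbetaNE (Tm.gapp t u y r) (Tm.gapp t u y r')

/-- Freshness of a variable for a distant context (capture avoidance). -/
def DCtx.Fresh : DCtx → ℕ → Prop
  | .hole, _ => True
  | .gapp s u y D, x => x ∉ Tm.fv s ∧ x ∉ Tm.fv u ∧ x ≠ y ∧ D.Fresh x

/-- β-reduction of ΛJ: (λx.t)(u, y.r) → [[u/x]t/y]r, closed under contexts. -/
inductive JBeta : Tm → Tm → Prop
  | root (x : ℕ) (t u : Tm) (y : ℕ) (r : Tm) :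
      JBeta (Tm.gapp (Tm.lam x t) u y r) (Tm.sub (Tm.sub u x t) y r)
  | lam (x : ℕ) {t t' : Tm} : JBeta t t' → JBeta (Tm.lam x t) (Tm.lam x t')
  | gapp₁ {t t'} (u : Tm) (y : ℕ) (r : Tm) :
      JBeta t t' → JBeta (Tm.gapp t u y r) (Tm.gapp t' u y r)
  | gapp₂ (t : Tm) {u u'} (y : ℕ) (r : Tm) :
      JBeta u u' → JBeta (Tm.gapp t u y r) (Tm.gapp t u' y r)
  | gapp₃ (t u : Tm) (y : ℕ) {r r'} :
      JBeta r r' → JBeta (Tm.gapp t u y r) (Tm.gapp t u y r')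

/-- π-reduction of ΛJ: t(u, x.r)(u', y.r') → t(u, x.r(u', y.r')), closed under contexts. -/
inductive JPi : Tm → Tm → Prop
  | root (t u : Tm) (x : ℕ) (r u' : Tm) (y : ℕ) (r' : Tm) :
      JPi (Tm.gapp (Tm.gapp t u x r) u' y r') (Tm.gapp t u x (Tm.gapp r u' y r'))
  | lam (x : ℕ) {t t' : Tm} : JPi t t' → JPi (Tm.lam x t) (Tm.lam x t')
  | gapp₁ {t t'} (u : Tm) (y : ℕ) (r : Tm) :
      JPi t t' → JPi (Tm.gapp t u y r) (Tm.gapp t' u y r)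
  | gapp₂ (t : Tm) {u u'} (y : ℕ) (r : Tm) :
      JPi u u' → JPi (Tm.gapp t u y r) (Tm.gapp t u' y r)
  | gapp₃ (t u : Tm) (y : ℕ) {r r'} :
      JPi r r' → JPi (Tm.gapp t u y r) (Tm.gapp t u y r')
lemma mvar_not_abs : ∀ t, Mvar t → ¬ AbsShape t := by
  intro t
  induction t with
  | var x => rintro _ ⟨D, x', s, h⟩; cases D <;> simp [DCtx.fill] at h
  | lam x t ih => intro h; cases h
  | gapp t u y r iht ihu ihr =>
    intro h habs
    cases h with
    | gapp y ht hu hr =>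
      obtain ⟨D, x', s, hD⟩ := habs
      cases D with
      | hole => simp [DCtx.fill] at hD
      | gapp s' u' y' D' =>
        simp [DCtx.fill] at hD
        exact ihr hr ⟨D', x', s, hD.2.2.2⟩

lemma mvar_mnf : ∀ t, Mvar t → Mnf t := by
  intro t
  induction t with
  | var x => intro _; exact Mnf.var x
  | lam x t ih => intro h; cases h
  | gapp t u y r iht ihu ihr =>
    intro h
    cases h with
    | gapp y ht hu hr => exact Mnf.gapp y ht hu (ihr hr)

lemma mnf_mvar : ∀ t, Mnf t → ¬ AbsShape t → Mvar t := by
  intro t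
  induction t with
  | var x => intro _ _; exact Mvar.var x
  | lam x t ih => intro _ habs; exact absurd ⟨DCtx.hole, x, t, rfl⟩ habs
  | gapp t u y r iht ihu ihr =>
    intro h habs
    cases h with
    | gapp y ht hu hr =>
      refine Mvar.gapp y ht hu (ihr hr ?_)
      rintro ⟨D, x', s, hD⟩
      exact habs ⟨DCtx.gapp t u y D, x', s, by simp [DCtx.fill, hD]⟩

lemma dbeta_not_mnf : ∀ {t t'}, Dbeta t t' → ¬ Mnf t := by
  intro t t' h
  induction h with
  | root D x t u y r =>
    intro h
    cases h with
    | gapp _ ht _ _ => exact mvar_not_abs _ ht ⟨D, x, t, rfl⟩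
  | lam x _ ih => intro h; cases h with | lam _ ht => exact ih ht
  | gapp₁ u y r _ ih =>
    intro h; cases h with | gapp _ ht _ _ => exact ih (mvar_mnf _ ht)
  | gapp₂ t y r _ ih =>
    intro h; cases h with | gapp _ _ hu _ => exact ih hu
  | gapp₃ t u y _ ih =>
    intro h; cases h with | gapp _ _ _ hr => exact ih hr

theorem dbeta_nf_iff_m (t : Tm) : DbetaNF t ↔ Mnf t := by
  constructor
  · intro hnf
    induction t with
    | var x => exact Mnf.var x
    | lam x t ih =>
      refine Mnf.lam x (ih ?_)
      intro t' h; exact hnf _ (Dbeta.lam x h)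
    | gapp t u y r iht ihu ihr =>
      have ht : Mnf t := iht fun t' h => hnf _ (Dbeta.gapp₁ u y r h)
      have hu : Mnf u := ihu fun u' h => hnf _ (Dbeta.gapp₂ t y r h)
      have hr : Mnf r := ihr fun r' h => hnf _ (Dbeta.gapp₃ t u y h)
      have habs : ¬ AbsShape t := by
        rintro ⟨D, x', s, hD⟩
        exact hnf _ (hD ▸ Dbeta.root D x' s u y r)
      exact Mnf.gapp y (mnf_mvar t ht habs) hu hr
  · intro h t' hstep
    exact dbeta_not_mnf hstep h
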